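/- arXiv:2508.07303 — 2 statements merged into one kernel-verified Lean document; each statement's English description precedes it below -/
import Mathlib

section
/- Let r = [a_1, -a_2, a_3, ..., ±a_n] and r' = [a_n, -a_{n-1}, ..., ±a_1] be the continued fractions of a sequence and its (sign-alternated) reversal, with all |a_i| ≥ 3. If {r, r'} = {s, s'} where s, s' are built the same way from b_1, ..., b_m with all |b_j| ≥ 3, then m = n and either a_i = b_i for all i or a_i = b_{n+1-i} for all i. -/
/-- The continued fraction value `[c₁; c₂, …, cₙ] = c₁ + 1/(c₂ + 1/(⋯ + 1/cₙ))`. -/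
noncomputable def cfrac : List ℤ → ℝ
  | [] => 0
  | a :: l => a + 1 / cfrac l

/-- Apply the alternating signs: `[a₁, -a₂, a₃, -a₄, …]`. -/
def altSign (l : List ℤ) : List ℤ := l.mapIdx fun i a => (-1) ^ i * a

/-! Multiplying the `i`-th entry by `(-1)^i` is an involution preserving absolute values, so
it suffices that `cfrac` is injective on lists with all entries of absolute value at least `3`.
For such a list the tail satisfies `|(cfrac l)⁻¹| ≤ 2/5`, so the head is the integer nearest to
`cfrac (c :: l)` and can be read off the value; inverting the remainder recovers the tail. -/

lemma cfrac_cons (c : ℤ) (l : List ℤ) : cfrac (c :: l) = c + (cfrac l)⁻¹ := by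
  rw [cfrac, one_div]

lemma five_halves_le_abs_cfrac_cons {c : ℤ} {l : List ℤ} (hc : 3 ≤ |c|)
    (hl : |(cfrac l)⁻¹| ≤ 2 / 5) : 5 / 2 ≤ |cfrac (c :: l)| := by
  have hc' : (3 : ℝ) ≤ |(c : ℝ)| := by exact_mod_cast hc
  have := abs_sub_abs_le_abs_add (c : ℝ) (cfrac l)⁻¹
  rw [cfrac_cons]
  linarith

lemma abs_inv_cfrac_le_two_fifths {l : List ℤ} (hl : ∀ x ∈ l, 3 ≤ |x|) :
    |(cfrac l)⁻¹| ≤ 2 / 5 := by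
  induction l with
  | nil => norm_num [cfrac]
  | cons c l ih =>
    have hcons := five_halves_le_abs_cfrac_cons (hl c List.mem_cons_self)
      (ih (List.forall_mem_cons.1 hl).2)
    rw [abs_inv]
    exact inv_le_of_inv_le₀ (by norm_num) (by linarith)

lemma cfrac_eq_zero_iff {l : List ℤ} (hl : ∀ x ∈ l, 3 ≤ |x|) : cfrac l = 0 ↔ l = [] := by
  cases l with
  | nil => simp [cfrac]
  | cons c l =>
    have := five_halves_le_abs_cfrac_cons (hl c List.mem_cons_self)
      (abs_inv_cfrac_le_two_fifths (List.forall_mem_cons.1 hl).2)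
    simp only [reduceCtorEq, iff_false]
    intro h0
    norm_num [h0] at this

lemma cfrac_injOn : Set.InjOn cfrac {l | ∀ x ∈ l, 3 ≤ |x|} := by
  intro l hl m hm heq
  induction l generalizing m with
  | nil => exact ((cfrac_eq_zero_iff hm).1 heq.symm).symm
  | cons c l ih =>
    cases m with
    | nil => exact (cfrac_eq_zero_iff hl).1 heq
    | cons d m =>
      have hl' := (List.forall_mem_cons.1 hl).2
      have hm' := (List.forall_mem_cons.1 hm).2
      rw [cfrac_cons, cfrac_cons] at heq
      have hcd : c = d := by
        have : |((c - d : ℤ) : ℝ)| < 1 := by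
          rw [Int.cast_sub, show (c : ℝ) - d = (cfrac m)⁻¹ - (cfrac l)⁻¹ by linarith]
          linarith [abs_sub (cfrac m)⁻¹ (cfrac l)⁻¹, abs_inv_cfrac_le_two_fifths hl',
            abs_inv_cfrac_le_two_fifths hm']
        rw [← Int.cast_abs, ← Int.cast_one, Int.cast_lt, Int.abs_lt_one_iff] at this
        omega
      subst hcd
      rw [ih hl' hm' (inv_injective (add_left_cancel heq))]

lemma altSign_involutive : Function.Involutive altSign := by
  intro l
  apply List.ext_getElem (by simp [altSign])
  intro i _ _
  simp only [altSign, List.getElem_mapIdx, ← mul_assoc, ← mul_pow]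
  norm_num

lemma map_abs_altSign (l : List ℤ) : (altSign l).map abs = l.map abs := by
  apply List.ext_getElem (by simp [altSign])
  intro i _ _
  simp [altSign, abs_mul]

lemma forall_mem_altSign_three_le_abs {l : List ℤ} (hl : ∀ x ∈ l, 3 ≤ |x|) :
    ∀ x ∈ altSign l, 3 ≤ |x| := by
  rw [← List.forall_mem_map (P := (3 ≤ ·)), map_abs_altSign, List.forall_mem_map]
  exact hl

theorem schubert_pair_unique_general (a b : List ℤ)
    (ha : ∀ x ∈ a, 3 ≤ |x|) (hb : ∀ x ∈ b, 3 ≤ |x|)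
    (h : ({cfrac (altSign a), cfrac (altSign a.reverse)} : Set ℝ)
        = {cfrac (altSign b), cfrac (altSign b.reverse)}) :
    a = b ∨ a = b.reverse := by
  have hmem : cfrac (altSign a) ∈
      ({cfrac (altSign b), cfrac (altSign b.reverse)} : Set ℝ) := h ▸ Set.mem_insert _ _
  have hb_rev : ∀ x ∈ b.reverse, 3 ≤ |x| := by simpa using hb
  have cfrac_altSign_inj {l : List ℤ} (hl : ∀ x ∈ l, 3 ≤ |x|)
      (heq : cfrac (altSign a) = cfrac (altSign l)) : a = l :=
    altSign_involutive.injective <| cfrac_injOn (forall_mem_altSign_three_le_abs ha)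
      (forall_mem_altSign_three_le_abs hl) heq
  rcases hmem with heq | heq
  · exact .inl (cfrac_altSign_inj hb heq)
  · exact .inr (cfrac_altSign_inj hb_rev heq)

/-- Uniqueness of the 3-highly twisted Schubert normal form, arithmetic core:
if the unordered pair `{r, r'}` of continued fraction values of the
sign-alternated sequence and its sign-alternated reversal agree for two
sequences with all entries of absolute value at least 3, then the sequences
agree up to reversal. -/
theorem schubert_pair_unique (a b : List ℤ) (ha0 : a ≠ []) (hb0 : b ≠ [])
    (ha : ∀ x ∈ a, 3 ≤ |x|) (hb : ∀ x ∈ b, 3 ≤ |x|)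
    (h : ({cfrac (altSign a), cfrac (altSign a.reverse)} : Set ℝ)
        = {cfrac (altSign b), cfrac (altSign b.reverse)}) :
    a = b ∨ a = b.reverse :=
  schubert_pair_unique_general a b ha hb h
end

section
/- Let x_0 = 0 and define x_{j+1} = 1/(3 - x_j) for j ≥ 0 (the convergents-from-the-tail of [0; 3, -3, 3, -3, ...] in absolute value). Then the sequence (x_j) is increasing, bounded above by (3 - √5)/2, and for any integers a_1, ..., a_n with |a_i| ≥ 3, |[0; a_1, ..., a_n]| ≤ x_n ≤ (3 - √5)/2. -/
open Real Set

lemma sqrt_five_lt_three : √5 < 3 := by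
  rw [sqrt_lt' (by norm_num)]
  norm_num

lemma one_div_three_sub_sqrt_five_fixed : 1 / (3 - (3 - √5) / 2) = (3 - √5) / 2 := by
  refine (eq_one_div_of_mul_eq_one_left ?_).symm
  nlinarith [sq_sqrt (show (0 : ℝ) ≤ 5 by norm_num)]

lemma one_div_three_sub_mem_Icc {t : ℝ} (ht : t ∈ Icc 0 ((3 - √5) / 2)) :
    1 / (3 - t) ∈ Icc 0 ((3 - √5) / 2) := by
  have hα : (3 - √5) / 2 < 3 := by linarith [sqrt_nonneg 5]
  refine ⟨one_div_nonneg.2 (by linarith [ht.2]), ?_⟩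
  calc 1 / (3 - t) ≤ 1 / (3 - (3 - √5) / 2) :=
        one_div_le_one_div_of_le (by linarith) (by linarith [ht.2])
    _ = (3 - √5) / 2 := one_div_three_sub_sqrt_five_fixed

lemma abs_one_div_add_le {a t s c : ℝ} (ha : c ≤ |a|) (ht : |t| ≤ s) (hs : s < c) :
    |1 / (a + t)| ≤ 1 / (c - s) := by
  have hsum : c - s ≤ |a + t| := by
    have := abs_sub_abs_le_abs_sub a (-t)
    rw [abs_neg, sub_neg_eq_add] at this
    linarith
  rw [abs_div, abs_one]
  exact one_div_le_one_div_of_le (by linarith) hsum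

section TailRecursion

variable {x : ℕ → ℝ} (hx0 : x 0 = 0) (hrec : ∀ j, x (j + 1) = 1 / (3 - x j))
include hx0 hrec

lemma tail_mem_Icc (j : ℕ) : x j ∈ Icc 0 ((3 - √5) / 2) := by
  induction j with
  | zero => exact hx0 ▸ ⟨le_rfl, by linarith [sqrt_five_lt_three]⟩
  | succ j ih => exact hrec j ▸ one_div_three_sub_mem_Icc ih

lemma tail_lt_three (j : ℕ) : x j < 3 :=
  (tail_mem_Icc hx0 hrec j).2.trans_lt (by linarith [sqrt_nonneg 5])

lemma tail_lt_succ (j : ℕ) : x j < x (j + 1) := by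
  induction j with
  | zero => rw [hrec, hx0]; norm_num
  | succ j ih =>
    calc x (j + 1) = 1 / (3 - x j) := hrec j
      _ < 1 / (3 - x (j + 1)) :=
        one_div_lt_one_div_of_lt (sub_pos.2 (tail_lt_three hx0 hrec _)) (sub_lt_sub_left ih 3)
      _ = x (j + 1 + 1) := (hrec _).symm

lemma abs_one_div_cfrac_le (l : List ℤ) (hl : ∀ a ∈ l, 3 ≤ |a|) : |1 / cfrac l| ≤ x l.length := by
  induction l with
  | nil => simp [cfrac, hx0]
  | cons a l ih =>
    rw [cfrac, List.length_cons, hrec]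
    have ha : (3 : ℝ) ≤ |(a : ℝ)| := by exact_mod_cast hl a List.mem_cons_self
    exact abs_one_div_add_le ha (ih fun b hb => hl b (List.mem_cons_of_mem a hb))
      (tail_lt_three hx0 hrec l.length)

end TailRecursion

/-- The tail-convergent recursion: `x₀ = 0`, `x_{j+1} = 1/(3 - xⱼ)` is
increasing, bounded above by `(3 - √5)/2`, and dominates the absolute value of
any continued fraction `[0; a₁, …, aₙ]` with all `|aᵢ| ≥ 3`. -/
theorem tail_recursion_bound (x : ℕ → ℝ)
    (hx0 : x 0 = 0) (hrec : ∀ j, x (j + 1) = 1 / (3 - x j)) :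
    (∀ j, x j < x (j + 1)) ∧
    (∀ j, x j ≤ (3 - Real.sqrt 5) / 2) ∧
    (∀ l : List ℤ, (∀ a ∈ l, 3 ≤ |a|) → |1 / cfrac l| ≤ x l.length) :=
  ⟨tail_lt_succ hx0 hrec, fun j => (tail_mem_Icc hx0 hrec j).2, abs_one_div_cfrac_le hx0 hrec⟩
end
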